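/- Let n ≥ 34 be an even integer such that 4n − 15 is a perfect square, and let k = (√(4n−15) − 1)/2. Then at least one of the two variant caterpillars C_{n−3}(n/2 − 1, 2; n/2 + k − 2, 1) and C_{n−3}(n/2 − 1, 2; n/2 + k − 3, 1) is transmission irregular. -/
import Mathlib


open SimpleGraph

variable {V : Type*}

/-- The transmission of a vertex `v`: the sum of distances from `v` to all vertices. -/
noncomputable def transmission (G : SimpleGraph V) [Fintype V] (v : V) : ℕ :=
  ∑ u : V, G.dist v u

/-- The Wiener index: the sum of distances over all unordered pairs of vertices. -/
noncomputable def wienerIndex (G : SimpleGraph V) [Fintype V] : ℕ :=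
  (∑ u : V, ∑ w : V, G.dist u w) / 2

/-- A graph on at least two vertices is transmission irregular if all of its vertices
have pairwise distinct transmissions. -/
def TransIrregular (G : SimpleGraph V) [Fintype V] : Prop :=
  2 ≤ Fintype.card V ∧ Function.Injective (transmission G)

/-- The degree of a vertex. -/
noncomputable def vertexDegree (G : SimpleGraph V) (v : V) : ℕ :=
  Nat.card (G.neighborSet v)

/-- A natural number is a perfect square. -/
def IsPerfectSquare (m : ℕ) : Prop := ∃ t : ℕ, m = t * t

/-- The starlike tree `S(a, b, c)`: three pendent paths of lengths `a`, `b`, `c`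
emanating from a common central vertex (vertex `0`).  The first branch consists of the
vertices `1, …, a`, the second of `a+1, …, a+b` and the third of `a+b+1, …, a+b+c`. -/
def starlike (a b c : ℕ) : SimpleGraph (Fin (a + b + c + 1)) :=
  SimpleGraph.fromRel (fun x y =>
    (y.val = x.val + 1 ∧ x.val ≠ a ∧ x.val ≠ a + b) ∨
    (x.val = 0 ∧ (y.val = a + 1 ∨ y.val = a + b + 1)))

/-- The ordinary caterpillar `C_m(a, b)`: the path `v_1 v_2 ⋯ v_m` (vertices `0, …, m-1`)
together with one new leaf attached to `v_a` (the vertex `m`, attached to `a-1`) and one new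
leaf attached to `v_b` (the vertex `m+1`, attached to `b-1`). -/
def caterpillar2 (m a b : ℕ) : SimpleGraph (Fin (m + 2)) :=
  SimpleGraph.fromRel (fun x y =>
    (y.val = x.val + 1 ∧ y.val < m) ∨
    (x.val = a - 1 ∧ y.val = m) ∨
    (x.val = b - 1 ∧ y.val = m + 1))

/-- The variant caterpillar `C_m(a, 2; b, 1)`: the path `v_1 v_2 ⋯ v_m`
(vertices `0, …, m-1`) together with a pendent path of length two attached to `v_a`
(vertices `m` and `m+1`) and a pendent path of length one attached to `v_b`
(the vertex `m+2`). -/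
def varCaterpillar (m a b : ℕ) : SimpleGraph (Fin (m + 3)) :=
  SimpleGraph.fromRel (fun x y =>
    (y.val = x.val + 1 ∧ y.val < m) ∨
    (x.val = a - 1 ∧ y.val = m) ∨
    (x.val = m ∧ y.val = m + 1) ∨
    (x.val = b - 1 ∧ y.val = m + 2))

/-- `T` is a transmission irregular tree of order `n` attaining the maximum Wiener
index among all transmission irregular trees of order `n`. -/
def MaxTITree (n : ℕ) (T : SimpleGraph (Fin n)) : Prop :=
  T.IsTree ∧ TransIrregular T ∧
    ∀ T' : SimpleGraph (Fin n), T'.IsTree → TransIrregular T' →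
      wienerIndex T' ≤ wienerIndex T

/-- The graph `X` is, up to isomorphism, the unique transmission irregular tree of
order `n` attaining the maximum Wiener index. -/
def UniqueMaxTITree (n : ℕ) {m : ℕ} (X : SimpleGraph (Fin m)) : Prop :=
  (∃ T : SimpleGraph (Fin n), MaxTITree n T ∧ Nonempty (T ≃g X)) ∧
    ∀ T : SimpleGraph (Fin n), MaxTITree n T → Nonempty (T ≃g X)

namespace VC

def ab (x y : ℕ) : ℕ := (x - y) + (y - x)
def pp (m a' b' i : ℕ) : ℕ := if i < m then i else if i = m + 2 then b' else a'
def ee (m i : ℕ) : ℕ := if i < m then 0 else if i = m + 1 then 2 else 1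
def DD (m a' b' i j : ℕ) : ℕ :=
  if i = j then 0
  else if (i = m ∧ j = m + 1) ∨ (i = m + 1 ∧ j = m) then 1
  else ab (pp m a' b' i) (pp m a' b' j) + ee m i + ee m j

lemma ltm3 (m : ℕ) : m < m + 3 := Nat.lt_add_of_pos_right (by decide)
lemma ltm13 (m : ℕ) : m + 1 < m + 3 := by omega
lemma ltm23 (m : ℕ) : m + 2 < m + 3 := by omega

lemma walk_bound {V : Type*} {G' : SimpleGraph V} (f : V → ℕ)
    (hf : ∀ v w, G'.Adj v w → f w ≤ f v + 1) {u v : V} (p : G'.Walk u v) :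
    f v ≤ f u + p.length := by
  induction p with
  | nil => simp
  | cons h q ih =>
      have := hf _ _ h
      simp only [SimpleGraph.Walk.length_cons]
      omega

section
variable {m a' b' : ℕ}
local notation "G" => varCaterpillar m (a'+1) (b'+1)

lemma adj_iff (x y : Fin (m+3)) :
    (G).Adj x y ↔ x ≠ y ∧
      (((y.val = x.val + 1 ∧ y.val < m) ∨ (x.val = a' ∧ y.val = m) ∨
        (x.val = m ∧ y.val = m + 1) ∨ (x.val = b' ∧ y.val = m + 2)) ∨
       ((x.val = y.val + 1 ∧ x.val < m) ∨ (y.val = a' ∧ x.val = m) ∨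
        (y.val = m ∧ x.val = m + 1) ∨ (y.val = b' ∧ x.val = m + 2))) := by
  simp [varCaterpillar, fromRel_adj]

set_option maxHeartbeats 2000000 in
lemma pot (ha : a' < m) (hab : a' ≤ b') (hb : b' < m)
    (u v w : ℕ) (hu : u < m + 3)
    (hrel : (w = v + 1 ∧ w < m) ∨ (v = a' ∧ w = m) ∨
        (v = m ∧ w = m + 1) ∨ (v = b' ∧ w = m + 2)) :
    DD m a' b' u w ≤ DD m a' b' u v + 1 ∧ DD m a' b' u v ≤ DD m a' b' u w + 1 := by
  unfold DD pp ee ab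
  rcases hrel with ⟨h1, h2⟩ | ⟨h1, h2⟩ | ⟨h1, h2⟩ | ⟨h1, h2⟩ <;> subst h1 <;>
    first
    | (subst h2; split_ifs <;> omega)
    | (split_ifs <;> omega)

lemma adj' {x y : Fin (m+3)}
    (hrel : (y.val = x.val + 1 ∧ y.val < m) ∨ (x.val = a' ∧ y.val = m) ∨
      (x.val = m ∧ y.val = m + 1) ∨ (x.val = b' ∧ y.val = m + 2))
    (hxy : x.val ≠ y.val) : (G).Adj x y := by
  rw [adj_iff]
  exact ⟨fun h => hxy (by rw [h]), Or.inl hrel⟩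

lemma adj_am (ha : a' < m) : (G).Adj ⟨a', lt_trans ha (ltm3 m)⟩ ⟨m, ltm3 m⟩ :=
  adj' (Or.inr (Or.inl ⟨rfl, rfl⟩)) (by simp only [Fin.val_mk]; omega)

lemma adj_mm : (G).Adj ⟨m, ltm3 m⟩ ⟨m+1, ltm13 m⟩ :=
  adj' (Or.inr (Or.inr (Or.inl ⟨rfl, rfl⟩))) (by simp only [Fin.val_mk]; omega)

lemma adj_bm (hb : b' < m) : (G).Adj ⟨b', lt_trans hb (ltm3 m)⟩ ⟨m+2, ltm23 m⟩ :=
  adj' (Or.inr (Or.inr (Or.inr ⟨rfl, rfl⟩))) (by simp only [Fin.val_mk]; omega)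

lemma reach (ha : a' < m) (hb : b' < m) {x y : Fin (m+3)} : (G).Reachable x y := by
  suffices H : ∀ z : Fin (m+3), (G).Reachable ⟨0, by omega⟩ z from (H x).symm.trans (H y)
  have hpath : ∀ t : ℕ, ∀ (i : ℕ) (h : i + t < m),
      (G).Reachable ⟨i, by omega⟩ ⟨i + t, by omega⟩ := by
    intro t
    induction t with
    | zero => intro i h; rfl
    | succ t ih =>
        intro i h
        have step : (G).Adj ⟨i, by omega⟩ ⟨i+1, by omega⟩ :=
          adj' (Or.inl ⟨rfl, by simp only [Fin.val_mk]; omega⟩)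
            (by simp only [Fin.val_mk]; omega)
        have tail := ih (i+1) (by omega)
        have e : (⟨i + 1 + t, by omega⟩ : Fin (m+3)) = ⟨i + (t+1), by omega⟩ :=
          Fin.ext (by simp only [Fin.val_mk]; omega)
        rw [e] at tail
        exact step.reachable.trans tail
  have hp0 : ∀ (j : ℕ) (h : j < m), (G).Reachable ⟨0, by omega⟩ ⟨j, by omega⟩ := by
    intro j h
    have := hpath j 0 (by omega)
    have e : (⟨0 + j, by omega⟩ : Fin (m+3)) = ⟨j, by omega⟩ :=
      Fin.ext (by simp only [Fin.val_mk]; omega)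
    rwa [e] at this
  intro z
  rcases Nat.lt_or_ge z.val m with h | h
  · have := hp0 z.val h
    have e : (⟨z.val, by omega⟩ : Fin (m+3)) = z := Fin.ext rfl
    rwa [e] at this
  · have hm0 : (G).Reachable ⟨0, by omega⟩ ⟨m, ltm3 m⟩ :=
      (hp0 a' ha).trans (adj_am ha).reachable
    rcases Nat.lt_or_ge z.val (m+1) with h2 | h2
    · have e : (⟨m, ltm3 m⟩ : Fin (m+3)) = z := Fin.ext (by simp only [Fin.val_mk]; omega)
      rwa [e] at hm0
    rcases Nat.lt_or_ge z.val (m+2) with h3 | h3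
    · have := hm0.trans adj_mm.reachable
      have e : (⟨m+1, ltm13 m⟩ : Fin (m+3)) = z := Fin.ext (by simp only [Fin.val_mk]; omega)
      rwa [e] at this
    · have := (hp0 b' hb).trans (adj_bm hb).reachable
      have e : (⟨m+2, ltm23 m⟩ : Fin (m+3)) = z := Fin.ext (by simp only [Fin.val_mk]; omega)
      rwa [e] at this

lemma conn (ha : a' < m) (hb : b' < m) : (G).Connected := by
  rw [connected_iff]
  exact ⟨fun u v => reach ha hb, ⟨⟨0, by omega⟩⟩⟩

lemma dist_path (ha : a' < m) (hb : b' < m) :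
    ∀ (t i : ℕ) (h : i + t < m), (G).dist ⟨i, by omega⟩ ⟨i + t, by omega⟩ ≤ t := by
  intro t
  induction t with
  | zero =>
      intro i h
      have e : (⟨i + 0, by omega⟩ : Fin (m+3)) = ⟨i, by omega⟩ :=
        Fin.ext (by simp only [Fin.val_mk]; omega)
      rw [e, SimpleGraph.dist_self]
  | succ t ih =>
      intro i h
      have step : (G).Adj ⟨i, by omega⟩ ⟨i+1, by omega⟩ :=
        adj' (Or.inl ⟨rfl, by simp only [Fin.val_mk]; omega⟩)
          (by simp only [Fin.val_mk]; omega)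
      have h1 : (G).dist ⟨i, by omega⟩ ⟨i+1, by omega⟩ ≤ 1 :=
        (SimpleGraph.dist_eq_one_iff_adj.2 step).le
      have h2 := ih (i+1) (by omega)
      have e : (⟨i + 1 + t, by omega⟩ : Fin (m+3)) = ⟨i + (t+1), by omega⟩ :=
        Fin.ext (by simp only [Fin.val_mk]; omega)
      rw [e] at h2
      calc (G).dist ⟨i, by omega⟩ ⟨i + (t+1), by omega⟩
      _ ≤ _ + _ := (conn ha hb).dist_triangle (v := ⟨i+1, by omega⟩)
      _ ≤ t + 1 := by omega

lemma dist_path' (ha : a' < m) (hb : b' < m) (i j : ℕ) (hi : i < m) (hj : j < m) :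
    (G).dist ⟨i, by omega⟩ ⟨j, by omega⟩ ≤ ab i j := by
  rcases Nat.le_total i j with h | h
  · have := dist_path ha hb (j - i) i (by omega)
    have e : (⟨i + (j - i), by omega⟩ : Fin (m+3)) = ⟨j, by omega⟩ :=
      Fin.ext (by simp only [Fin.val_mk]; omega)
    rw [e] at this
    unfold ab; omega
  · have := dist_path ha hb (i - j) j (by omega)
    have e : (⟨j + (i - j), by omega⟩ : Fin (m+3)) = ⟨i, by omega⟩ :=
      Fin.ext (by simp only [Fin.val_mk]; omega)
    rw [e] at this
    rw [SimpleGraph.dist_comm] at this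
    unfold ab; omega

lemma pp_lt (ha : a' < m) (hb : b' < m) (i : ℕ) (hi : i < m + 3) :
    pp m a' b' i < m := by unfold pp; split_ifs <;> omega

lemma proj (ha : a' < m) (hab : a' ≤ b') (hb : b' < m) (w : Fin (m+3)) :
    (G).dist ⟨pp m a' b' w.val, lt_trans (pp_lt ha hb w.val w.isLt) (ltm3 m)⟩ w
      ≤ ee m w.val := by
  have hw := w.isLt
  rcases Nat.lt_or_ge w.val m with h | h
  · have e1 : (⟨pp m a' b' w.val, lt_trans (pp_lt ha hb w.val w.isLt) (ltm3 m)⟩ : Fin (m+3))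
        = w := Fin.ext (by simp [pp, h])
    rw [e1]
    simp [ee, h, SimpleGraph.dist_self]
  rcases Nat.lt_or_ge w.val (m+1) with h2 | h2
  · have e2 : (⟨pp m a' b' w.val, lt_trans (pp_lt ha hb w.val w.isLt) (ltm3 m)⟩ : Fin (m+3))
        = ⟨a', lt_trans ha (ltm3 m)⟩ :=
      Fin.ext (by simp only [Fin.val_mk]; unfold pp; split_ifs <;> omega)
    have e3 : ee m w.val = 1 := by unfold ee; split_ifs <;> omega
    have e1 : w = ⟨m, ltm3 m⟩ := Fin.ext (by simp only [Fin.val_mk]; omega)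
    rw [e2, e3, e1]
    exact (SimpleGraph.dist_eq_one_iff_adj.2 (adj_am ha)).le
  rcases Nat.lt_or_ge w.val (m+2) with h3 | h3
  · have e2 : (⟨pp m a' b' w.val, lt_trans (pp_lt ha hb w.val w.isLt) (ltm3 m)⟩ : Fin (m+3))
        = ⟨a', lt_trans ha (ltm3 m)⟩ :=
      Fin.ext (by simp only [Fin.val_mk]; unfold pp; split_ifs <;> omega)
    have e3 : ee m w.val = 2 := by unfold ee; split_ifs <;> omega
    have e1 : w = ⟨m+1, ltm13 m⟩ := Fin.ext (by simp only [Fin.val_mk]; omega)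
    rw [e2, e3, e1]
    have u1 := (SimpleGraph.dist_eq_one_iff_adj.2 (adj_am (b' := b') ha)).le
    have u2 := (SimpleGraph.dist_eq_one_iff_adj.2 (adj_mm (m := m) (a' := a') (b' := b'))).le
    have tri := (conn ha hb).dist_triangle (u := (⟨a', lt_trans ha (ltm3 m)⟩ : Fin (m+3)))
      (v := (⟨m, ltm3 m⟩ : Fin (m+3))) (w := (⟨m+1, ltm13 m⟩ : Fin (m+3)))
    omega
  · have e2 : (⟨pp m a' b' w.val, lt_trans (pp_lt ha hb w.val w.isLt) (ltm3 m)⟩ : Fin (m+3))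
        = ⟨b', lt_trans hb (ltm3 m)⟩ :=
      Fin.ext (by simp only [Fin.val_mk]; unfold pp; split_ifs <;> omega)
    have e3 : ee m w.val = 1 := by unfold ee; split_ifs <;> omega
    have e1 : w = ⟨m+2, ltm23 m⟩ := Fin.ext (by simp only [Fin.val_mk]; omega)
    rw [e2, e3, e1]
    exact (SimpleGraph.dist_eq_one_iff_adj.2 (adj_bm hb)).le

lemma dist_le_DD (ha : a' < m) (hab : a' ≤ b') (hb : b' < m) (u v : Fin (m+3)) :
    (G).dist u v ≤ DD m a' b' u.val v.val := by
  by_cases heq : u = v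
  · subst heq; simp [DD, SimpleGraph.dist_self]
  have hval : u.val ≠ v.val := fun h => heq (Fin.ext h)
  by_cases hsp : (u.val = m ∧ v.val = m + 1) ∨ (u.val = m + 1 ∧ v.val = m)
  · have hDD : DD m a' b' u.val v.val = 1 := by
      unfold DD; split_ifs <;> first | rfl | omega
    rw [hDD]
    rcases hsp with ⟨h1, h2⟩ | ⟨h1, h2⟩
    · have e1 : u = ⟨m, ltm3 m⟩ := Fin.ext (by simp only [Fin.val_mk]; omega)
      have e2 : v = ⟨m+1, ltm13 m⟩ := Fin.ext (by simp only [Fin.val_mk]; omega)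
      rw [e1, e2]
      exact (SimpleGraph.dist_eq_one_iff_adj.2 adj_mm).le
    · have e1 : u = ⟨m+1, ltm13 m⟩ := Fin.ext (by simp only [Fin.val_mk]; omega)
      have e2 : v = ⟨m, ltm3 m⟩ := Fin.ext (by simp only [Fin.val_mk]; omega)
      rw [e1, e2, SimpleGraph.dist_comm]
      exact (SimpleGraph.dist_eq_one_iff_adj.2 adj_mm).le
  · have hDD : DD m a' b' u.val v.val
        = ab (pp m a' b' u.val) (pp m a' b' v.val) + ee m u.val + ee m v.val := by
      unfold DD; split_ifs <;> first | rfl | omega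
    rw [hDD]
    have t1 := proj ha hab hb u
    have t2 := proj ha hab hb v
    have t3 := dist_path' ha hb _ _ (pp_lt ha hb u.val u.isLt) (pp_lt ha hb v.val v.isLt)
    have tri1 := (conn ha hb).dist_triangle (u := u)
      (v := (⟨pp m a' b' u.val, lt_trans (pp_lt ha hb u.val u.isLt) (ltm3 m)⟩ : Fin (m+3)))
      (w := v)
    have tri2 := (conn ha hb).dist_triangle
      (u := (⟨pp m a' b' u.val, lt_trans (pp_lt ha hb u.val u.isLt) (ltm3 m)⟩ : Fin (m+3)))
      (v := (⟨pp m a' b' v.val, lt_trans (pp_lt ha hb v.val v.isLt) (ltm3 m)⟩ : Fin (m+3)))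
      (w := v)
    rw [SimpleGraph.dist_comm] at t1
    omega

lemma DD_le_dist (ha : a' < m) (hab : a' ≤ b') (hb : b' < m) (u v : Fin (m+3)) :
    DD m a' b' u.val v.val ≤ (G).dist u v := by
  by_cases heq : u = v
  · subst heq; simp [DD]
  obtain ⟨p, hp⟩ := (reach ha hb (x := u) (y := v)).exists_walk_length_eq_dist
  have hf : ∀ x y : Fin (m+3), (G).Adj x y →
      DD m a' b' u.val y.val ≤ DD m a' b' u.val x.val + 1 := by
    intro x y hadj
    rw [adj_iff] at hadj
    rcases hadj.2 with hrel | hrel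
    · exact (pot ha hab hb u.val x.val y.val u.isLt hrel).1
    · exact (pot ha hab hb u.val y.val x.val u.isLt hrel).2
  have := walk_bound (fun z : Fin (m+3) => DD m a' b' u.val z.val) hf p
  have h0 : DD m a' b' u.val u.val = 0 := by simp [DD]
  omega

lemma dist_eq (ha : a' < m) (hab : a' ≤ b') (hb : b' < m) (u v : Fin (m+3)) :
    (G).dist u v = DD m a' b' u.val v.val :=
  le_antisymm (dist_le_DD ha hab hb u v) (DD_le_dist ha hab hb u v)

end
end VC

namespace VC

def SB (M c : ℕ) : ℕ := ∑ j ∈ Finset.range M, ab c j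

lemma SB_shift (M : ℕ) : SB M (M+1) = SB M M + M := by
  unfold SB
  have h : ∀ j ∈ Finset.range M, ab (M+1) j = ab M j + 1 := by
    intro j hj
    have := Finset.mem_range.1 hj
    unfold ab; omega
  rw [Finset.sum_congr rfl h, Finset.sum_add_distrib]
  simp

lemma two_SB : ∀ M c, c ≤ M → 2 * SB M c = c*(c+1) + (M-1-c)*(M-c) := by
  intro M
  induction M with
  | zero => intro c hc; interval_cases c; simp [SB]
  | succ M ih =>
      intro c hc
      rw [SB, Finset.sum_range_succ, ← SB]
      by_cases h1 : c + 1 ≤ M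
      · have habc : ab c M = M - c := by unfold ab; omega
        rw [habc]
        have IH := ih c (by omega)
        have e1 : M - 1 - c = M - (1 + c) := by omega
        have e2 : M + 1 - 1 - c = M + 1 - (1 + c) := by omega
        rw [e1] at IH
        rw [e2]
        zify [h1, (by omega : c ≤ M), (by omega : 1 + c ≤ M), (by omega : c ≤ M + 1),
          (by omega : 1 + c ≤ M + 1)] at IH ⊢
        linarith [IH]
      · rcases (by omega : c = M ∨ c = M + 1) with rfl | rfl
        · have habc : ab c c = 0 := by unfold ab; omega
          rw [habc]
          have IH := ih c le_rfl
          have e1 : c - 1 - c = 0 := by omega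
          have e2 : c + 1 - 1 - c = 0 := by omega
          rw [e1] at IH
          rw [e2]
          simp only [Nat.sub_self, Nat.zero_mul, Nat.mul_zero, Nat.add_zero] at IH ⊢
          omega
        · have habc : ab (M+1) M = 1 := by unfold ab; omega
          rw [habc, SB_shift]
          have IH := ih M le_rfl
          have e1 : M - 1 - M = 0 := by omega
          rw [e1] at IH
          have e3 : M + 1 - 1 - (M+1) = 0 := by omega
          rw [e3]
          simp only [Nat.sub_self, Nat.zero_mul, Nat.mul_zero, Nat.add_zero] at IH ⊢
          nlinarith [IH]

section
variable {m a' b' : ℕ}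
local notation "G" => varCaterpillar m (a'+1) (b'+1)

lemma sum_range_m3 (f : ℕ → ℕ) : ∑ j ∈ Finset.range (m+3), f j
    = (∑ j ∈ Finset.range m, f j) + f m + f (m+1) + f (m+2) := by
  have h1 : m + 3 = (m+2) + 1 := by omega
  have h2 : m + 2 = (m+1) + 1 := by omega
  rw [h1, Finset.sum_range_succ, h2, Finset.sum_range_succ, Finset.sum_range_succ]

lemma tr_eq (ha : a' < m) (hab : a' ≤ b') (hb : b' < m) (v : Fin (m+3)) :
    transmission (G) v = ∑ j ∈ Finset.range (m+3), DD m a' b' v.val j := by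
  unfold transmission
  rw [← Fin.sum_univ_eq_sum_range (fun j => DD m a' b' v.val j) (m+3)]
  exact Finset.sum_congr rfl (fun u _ => dist_eq ha hab hb v u)

lemma tr_path (ha : a' < m) (hab : a' ≤ b') (hb : b' < m) (i : ℕ) (hi : i < m)
    (h3 : i < m + 3) :
    transmission (G) ⟨i, h3⟩ = SB m i + 2 * ab i a' + ab i b' + 4 := by
  rw [tr_eq ha hab hb, sum_range_m3]
  have h0 : ∑ j ∈ Finset.range m, DD m a' b' (⟨i, by omega⟩ : Fin (m+3)).val j = SB m i := by
    refine Finset.sum_congr rfl fun j hj => ?_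
    have hj' := Finset.mem_range.1 hj
    simp only [Fin.val_mk]
    unfold DD pp ee ab
    split_ifs <;> omega
  rw [h0]
  simp only [Fin.val_mk]
  have h1 : DD m a' b' i m = ab i a' + 1 := by unfold DD pp ee ab; split_ifs <;> omega
  have h2 : DD m a' b' i (m+1) = ab i a' + 2 := by unfold DD pp ee ab; split_ifs <;> omega
  have h3 : DD m a' b' i (m+2) = ab i b' + 1 := by unfold DD pp ee ab; split_ifs <;> omega
  rw [h1, h2, h3]
  omega

lemma tr_m (ha : a' < m) (hab : a' ≤ b') (hb : b' < m) (h3 : m < m + 3) :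
    transmission (G) ⟨m, h3⟩ = SB m a' + m + (b' - a') + 3 := by
  rw [tr_eq ha hab hb, sum_range_m3]
  have h0 : ∑ j ∈ Finset.range m, DD m a' b' (⟨m, ltm3 m⟩ : Fin (m+3)).val j
      = SB m a' + m := by
    simp only [Fin.val_mk]
    have hcong : ∀ j ∈ Finset.range m, DD m a' b' m j = ab a' j + 1 := by
      intro j hj
      have := Finset.mem_range.1 hj
      unfold DD pp ee ab
      split_ifs <;> omega
    rw [Finset.sum_congr rfl hcong, Finset.sum_add_distrib, SB]
    simp
  rw [h0]
  simp only [Fin.val_mk]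
  have h1 : DD m a' b' m m = 0 := by unfold DD; split_ifs <;> first | rfl | omega
  have h2 : DD m a' b' m (m+1) = 1 := by unfold DD; split_ifs <;> first | rfl | omega
  have h3 : DD m a' b' m (m+2) = (b' - a') + 2 := by unfold DD pp ee ab; split_ifs <;> omega
  rw [h1, h2, h3]
  omega

lemma tr_m1 (ha : a' < m) (hab : a' ≤ b') (hb : b' < m) (h3 : m + 1 < m + 3) :
    transmission (G) ⟨m+1, h3⟩ = SB m a' + 2*m + (b' - a') + 4 := by
  rw [tr_eq ha hab hb, sum_range_m3]
  have h0 : ∑ j ∈ Finset.range m, DD m a' b' (⟨m+1, ltm13 m⟩ : Fin (m+3)).val j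
      = SB m a' + 2*m := by
    simp only [Fin.val_mk]
    have hcong : ∀ j ∈ Finset.range m, DD m a' b' (m+1) j = ab a' j + 2 := by
      intro j hj
      have := Finset.mem_range.1 hj
      unfold DD pp ee ab
      split_ifs <;> omega
    rw [Finset.sum_congr rfl hcong, Finset.sum_add_distrib, SB]
    simp
    omega
  rw [h0]
  simp only [Fin.val_mk]
  have h1 : DD m a' b' (m+1) m = 1 := by unfold DD; split_ifs <;> first | rfl | omega
  have h2 : DD m a' b' (m+1) (m+1) = 0 := by unfold DD; split_ifs <;> first | rfl | omega
  have h3 : DD m a' b' (m+1) (m+2) = (b' - a') + 3 := by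
    unfold DD pp ee ab; split_ifs <;> omega
  rw [h1, h2, h3]
  omega

lemma tr_m2 (ha : a' < m) (hab : a' ≤ b') (hb : b' < m) (h3 : m + 2 < m + 3) :
    transmission (G) ⟨m+2, h3⟩ = SB m b' + m + 2*(b' - a') + 5 := by
  rw [tr_eq ha hab hb, sum_range_m3]
  have h0 : ∑ j ∈ Finset.range m, DD m a' b' (⟨m+2, ltm23 m⟩ : Fin (m+3)).val j
      = SB m b' + m := by
    simp only [Fin.val_mk]
    have hcong : ∀ j ∈ Finset.range m, DD m a' b' (m+2) j = ab b' j + 1 := by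
      intro j hj
      have := Finset.mem_range.1 hj
      unfold DD pp ee ab
      split_ifs <;> omega
    rw [Finset.sum_congr rfl hcong, Finset.sum_add_distrib, SB]
    simp
  rw [h0]
  simp only [Fin.val_mk]
  have h1 : DD m a' b' (m+2) m = (b' - a') + 2 := by unfold DD pp ee ab; split_ifs <;> omega
  have h2 : DD m a' b' (m+2) (m+1) = (b' - a') + 3 := by
    unfold DD pp ee ab; split_ifs <;> omega
  have h3 : DD m a' b' (m+2) (m+2) = 0 := by unfold DD; split_ifs <;> first | rfl | omega
  rw [h1, h2, h3]
  omega

end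
end VC

namespace VC

lemma sqle {a b : ℤ} (h0 : 0 ≤ a) (h : a ≤ b) : a*a ≤ b*b :=
  mul_self_le_mul_self h0 h

lemma dec25 : ∀ a b : ZMod 25, ¬(a*a = 8*(b*b)+8*b+17) := by decide

lemma no_sq17 (x y : ℤ) : x*x ≠ 8*(y*y)+8*y+17 := by
  intro h
  have := congrArg (fun t : ℤ => (t : ZMod 25)) h
  push_cast at this
  exact dec25 _ _ this

section
variable {k d A i j : ℤ}

lemma L1 (hi : 0 ≤ i) (hij : i < j) (hj : j ≤ A)
    (heq : i*(i+1) + (2*A-i)*(2*A+1-i) + 4*(A-i) + 2*(A+d-i) + 8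
         = j*(j+1) + (2*A-j)*(2*A+1-j) + 4*(A-j) + 2*(A+d-j) + 8) : False := by
  have h2 : 2*((j-i)*(2*A+3-i-j)) = 0 := by linear_combination heq
  have p1 : 0 < j - i := by omega
  have p2 : 0 < 2*A+3-i-j := by omega
  have := mul_pos p1 p2
  linarith

lemma L2 (hij : i < j) (hiA : i ≤ A) (hjA : A < j) (hj : j ≤ A + d)
    (heq : i*(i+1) + (2*A-i)*(2*A+1-i) + 4*(A-i) + 2*(A+d-i) + 8
         = j*(j+1) + (2*A-j)*(2*A+1-j) + 4*(j-A) + 2*(A+d-j) + 8) : False := by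
  set s : ℤ := A - i with hs
  set t : ℤ := j - A with ht
  have hst : 2*(s*s)+6*s = 2*(t*t)+2*t := by linear_combination heq
  have hs0 : 0 ≤ s := by omega
  have ht1 : 1 ≤ t := by omega
  rcases le_or_gt t s with h | h
  · have hts : t*t ≤ s*s := sqle (by omega) h
    linarith
  · have h1 : s + 1 ≤ t := by omega
    have h2 : (s+1)*(s+1) ≤ t*t := sqle (by omega) h1
    have hex : (s+1)*(s+1) = s*s+2*s+1 := by ring
    linarith

lemma L3 (hd3 : 3 ≤ d) (hiA : i ≤ A) (hAi : 0 ≤ A - i) (hj : A + d < j)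
    (heq : i*(i+1) + (2*A-i)*(2*A+1-i) + 4*(A-i) + 2*(A+d-i) + 8
         = j*(j+1) + (2*A-j)*(2*A+1-j) + 4*(j-A) + 2*(j-A-d) + 8) : False := by
  set s : ℤ := A - i with hs
  set t : ℤ := j - A with ht
  have hs0 : 0 ≤ s := by omega
  have htd : d + 1 ≤ t := by omega
  have h2d : 4*d = 2*((t-s)*(t+s+3)) := by linear_combination heq
  rcases le_or_gt t s with h | h
  · have : (t-s)*(t+s+3) ≤ 0 :=
      mul_nonpos_of_nonpos_of_nonneg (by omega) (by omega)
    linarith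
  · have he1 : 1 ≤ t - s := by omega
    have hb : t+s+3 ≤ (t-s)*(t+s+3) := le_mul_of_one_le_left (by omega) he1
    have ht5 : s + 5 ≤ t := by linarith
    have hb2 : 5*(t+s+3) ≤ (t-s)*(t+s+3) :=
      mul_le_mul_of_nonneg_right (by omega) (by omega)
    linarith

lemma L4 (hij : i < j) (hiA : A < i) (hj : j ≤ A + d)
    (heq : i*(i+1) + (2*A-i)*(2*A+1-i) + 4*(i-A) + 2*(A+d-i) + 8
         = j*(j+1) + (2*A-j)*(2*A+1-j) + 4*(j-A) + 2*(A+d-j) + 8) : False := by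
  set t1 : ℤ := i - A with ht1
  set t2 : ℤ := j - A with ht2
  have hst : 2*(t1*t1)+2*t1 = 2*(t2*t2)+2*t2 := by linear_combination heq
  have h0 : 1 ≤ t1 := by omega
  have h1 : t1 + 1 ≤ t2 := by omega
  have h2 : (t1+1)*(t1+1) ≤ t2*t2 := sqle (by omega) h1
  have hex : (t1+1)*(t1+1) = t1*t1+2*t1+1 := by ring
  linarith

lemma L5 (hiA : A < i) (hi : i ≤ A + d) (hj : A + d < j)
    (heq : i*(i+1) + (2*A-i)*(2*A+1-i) + 4*(i-A) + 2*(A+d-i) + 8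
         = j*(j+1) + (2*A-j)*(2*A+1-j) + 4*(j-A) + 2*(j-A-d) + 8) : False := by
  set t1 : ℤ := i - A with ht1
  set t2 : ℤ := j - A with ht2
  have hst : 2*(t1*t1)+2*t1+4*d = 2*(t2*t2)+6*t2 := by linear_combination heq
  have h1 : t1 ≤ d := by omega
  have h2 : d + 1 ≤ t2 := by omega
  have q1 : t1*t1 ≤ d*d := sqle (by omega) h1
  have q2 : (d+1)*(d+1) ≤ t2*t2 := sqle (by omega) h2
  have hex : (d+1)*(d+1) = d*d+2*d+1 := by ring
  linarith

lemma L6 (hij : i < j) (hiA : A + d < i) (hd0 : 0 ≤ d)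
    (heq : i*(i+1) + (2*A-i)*(2*A+1-i) + 4*(i-A) + 2*(i-A-d) + 8
         = j*(j+1) + (2*A-j)*(2*A+1-j) + 4*(j-A) + 2*(j-A-d) + 8) : False := by
  set t1 : ℤ := i - A with ht1
  set t2 : ℤ := j - A with ht2
  have hst : 2*(t1*t1)+6*t1 = 2*(t2*t2)+6*t2 := by linear_combination heq
  have h1 : t1 + 1 ≤ t2 := by omega
  have h0 : 0 ≤ t1 := by omega
  have h2 : (t1+1)*(t1+1) ≤ t2*t2 := sqle (by omega) h1
  have hex : (t1+1)*(t1+1) = t1*t1+2*t1+1 := by ring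
  linarith

lemma M1 (hk : 5 ≤ k) (hA : 2*A = k*k+k) (hiA : i ≤ A) (hAi : 0 ≤ A - i)
    (heq : i*(i+1) + (2*A-i)*(2*A+1-i) + 4*(A-i) + 2*(A+d-i) + 8
         = 2*(A*A) + 6*A + 2*d + 8) : False := by
  set s : ℤ := A - i with hsd
  have hst : 2*(s*s)+6*s = 2*(k*k)+2*k := by linear_combination heq + 2*hA
  have hs0 : 0 ≤ s := by omega
  rcases le_or_gt s (k-1) with h | h
  · have h2 : s*s ≤ (k-1)*(k-1) := sqle hs0 h
    have hex : (k-1)*(k-1) = k*k-2*k+1 := by ring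
    linarith
  · have h2 : k*k ≤ s*s := sqle (by omega) (by omega)
    linarith

lemma M2 (hk : 5 ≤ k) (hdk : d + 1 ≤ k) (hA : 2*A = k*k+k) (hiA : A < i) (hi : i ≤ A + d)
    (heq : i*(i+1) + (2*A-i)*(2*A+1-i) + 4*(i-A) + 2*(A+d-i) + 8
         = 2*(A*A) + 6*A + 2*d + 8) : False := by
  set t : ℤ := i - A with htd2
  have hst : 2*(t*t)+2*t = 2*(k*k)+2*k := by linear_combination heq + 2*hA
  have h2 : t ≤ k - 1 := by omega
  have h3 : t*t ≤ (k-1)*(k-1) := sqle (by omega) h2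
  have hex : (k-1)*(k-1) = k*k-2*k+1 := by ring
  linarith

lemma M3 (hk : 5 ≤ k) (hd3 : 3 ≤ d) (hdk : d + 1 ≤ k) (hA : 2*A = k*k+k) (hi : A + d < i)
    (heq : i*(i+1) + (2*A-i)*(2*A+1-i) + 4*(i-A) + 2*(i-A-d) + 8
         = 2*(A*A) + 6*A + 2*d + 8) : False := by
  set t : ℤ := i - A with htd2
  have hst : 2*(t*t)+6*t = 2*(k*k)+2*k+4*d := by linear_combination heq + 2*hA
  have h1 : d + 1 ≤ t := by omega
  rcases le_or_gt t (k-1) with h | h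
  · have h2 : t*t ≤ (k-1)*(k-1) := sqle (by omega) h
    have hex : (k-1)*(k-1) = k*k-2*k+1 := by ring
    linarith
  · have h2 : k*k ≤ t*t := sqle (by omega) (by omega)
    linarith

lemma N1 (hA : 2*A = k*k+k) (hiA : i ≤ A) (hAi : 0 ≤ A - i)
    (heq : i*(i+1) + (2*A-i)*(2*A+1-i) + 4*(A-i) + 2*(A+d-i) + 8
         = 2*(A*A) + 10*A + 2*d + 12) : False := by
  set s : ℤ := A - i with hsd
  have hst : (2*s+3)*(2*s+3) = 8*(k*k)+8*k+17 := by linear_combination 2*heq + 8*hA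
  exact no_sq17 _ _ hst

lemma N2 (hk : 5 ≤ k) (hdk : d + 1 ≤ k) (hA : 2*A = k*k+k) (hiA : A < i) (hi : i ≤ A + d)
    (heq : i*(i+1) + (2*A-i)*(2*A+1-i) + 4*(i-A) + 2*(A+d-i) + 8
         = 2*(A*A) + 10*A + 2*d + 12) : False := by
  set t : ℤ := i - A with htd2
  have hst : 2*(t*t)+2*t = 4*(k*k)+4*k+4 := by linear_combination heq + 4*hA
  have h2 : t ≤ k - 1 := by omega
  have h3 : t*t ≤ (k-1)*(k-1) := sqle (by omega) h2
  have hex : (k-1)*(k-1) = k*k-2*k+1 := by ring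
  have hkk : 0 ≤ k*k := mul_self_nonneg k
  linarith

lemma N3 (hA : 2*A = k*k+k) (hi : A + d < i)
    (heq : i*(i+1) + (2*A-i)*(2*A+1-i) + 4*(i-A) + 2*(i-A-d) + 8
         = 2*(A*A) + 10*A + 2*d + 12) :
    (2*(i-A)+3)*(2*(i-A)+3) = 8*(k*k)+8*k+17+8*d := by
  linear_combination 2*heq + 8*hA

lemma P1 (hA : 2*A = k*k+k) (hiA : i ≤ A)
    (heq : i*(i+1) + (2*A-i)*(2*A+1-i) + 4*(A-i) + 2*(A+d-i) + 8
         = 2*(A*A) + 6*A + 2*(d*d) + 4*d + 12) :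
    (2*(A-i)+3)*(2*(A-i)+3) = 4*(d*d)+4*d+4*(k*k)+4*k+17 := by
  linear_combination 2*heq + 4*hA

lemma P2 (hk : 5 ≤ k) (hd3 : 3 ≤ d) (hA : 2*A = k*k+k) (hiA : A < i) (hi : i ≤ A + d)
    (heq : i*(i+1) + (2*A-i)*(2*A+1-i) + 4*(i-A) + 2*(A+d-i) + 8
         = 2*(A*A) + 6*A + 2*(d*d) + 4*d + 12) : False := by
  set t : ℤ := i - A with htd2
  have hst : 2*(t*t)+2*t = 2*(k*k)+2*k+2*(d*d)+2*d+4 := by linear_combination heq + 2*hA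
  have h2 : t ≤ d := by omega
  have h3 : t*t ≤ d*d := sqle (by omega) h2
  have hkk : 0 ≤ k*k := mul_self_nonneg k
  linarith

lemma P3 (hA : 2*A = k*k+k) (hi : A + d < i)
    (heq : i*(i+1) + (2*A-i)*(2*A+1-i) + 4*(i-A) + 2*(i-A-d) + 8
         = 2*(A*A) + 6*A + 2*(d*d) + 4*d + 12) :
    (2*(i-A)+3)*(2*(i-A)+3) = 4*(d*d)+12*d+4*(k*k)+4*k+17 := by
  linear_combination 2*heq + 4*hA

end
end VC

namespace VC

lemma natPQ {p q : ℕ} (h : p ≤ q) : p*p+p ≤ q*q+q :=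
  Nat.add_le_add (Nat.mul_le_mul h h) h

lemma two_sq_odd (x V : ℕ) (h : x*x = 4*V+1) : ∃ c, c*c+c = V := by
  rcases Nat.even_or_odd x with ⟨c, hc⟩ | ⟨c, hc⟩
  · subst hc
    have hh : (c+c)*(c+c) = 4*(c*c) := by ring
    omega
  · subst hc
    have hh : (2*c+1)*(2*c+1) = 4*(c*c+c)+1 := by ring
    exact ⟨c, by omega⟩

lemma combos (k x z : ℕ) (hk : 5 ≤ k)
    (hx : x*x = 8*(k*k)+16*k+9 ∨ x*x = 8*(k*k)+17 ∨ x*x = 8*(k*k)+8*k+9)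
    (hz : z*z = 8*(k*k)+16*k+1 ∨ z*z + 8*k = 8*(k*k)+25 ∨ z*z = 8*(k*k)+9) :
    False := by
  have hkk : 25 ≤ k*k := Nat.mul_le_mul hk hk
  have h5k : 5*k ≤ k*k := Nat.mul_le_mul_right k hk
  -- extract P = c*c+c
  have hP : (∃ c, c*c+c = 2*(k*k)+4*k+2) ∨ (∃ c, c*c+c = 2*(k*k)+4)
      ∨ (∃ c, c*c+c = 2*(k*k)+2*k+2) := by
    rcases hx with h | h | h
    · exact Or.inl (two_sq_odd x _ (by omega))
    · exact Or.inr (Or.inl (two_sq_odd x _ (by omega)))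
    · exact Or.inr (Or.inr (two_sq_odd x _ (by omega)))
  have hQ : (∃ e, e*e+e = 2*(k*k)+4*k) ∨ (∃ e, e*e+e+2*k = 2*(k*k)+6)
      ∨ (∃ e, e*e+e = 2*(k*k)+2) := by
    rcases hz with h | h | h
    · exact Or.inl (two_sq_odd z _ (by omega))
    · rcases Nat.even_or_odd z with ⟨e, he⟩ | ⟨e, he⟩
      · subst he
        have hh : (e+e)*(e+e) = 4*(e*e) := by ring
        omega
      · subst he
        have hh : (2*e+1)*(2*e+1) = 4*(e*e+e)+1 := by ring
        exact Or.inr (Or.inl ⟨e, by omega⟩)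
    · exact Or.inr (Or.inr (two_sq_odd z _ (by omega)))
  clear hx hz
  -- common expansion facts, parameterized later by omega
  obtain hP | hP | hP := hP <;> obtain ⟨c, hc⟩ := hP <;>
    obtain hQ | hQ | hQ := hQ <;> obtain ⟨e, he⟩ := hQ
  -- C11
  · have h1 : e + 1 ≤ c := by
      by_contra h
      have := natPQ (show c ≤ e by omega)
      omega
    have h2 := natPQ h1
    have hex : (e+1)*(e+1)+(e+1) = e*e+e+2*e+2 := by ring
    have he0 : e ≤ 0 := by linarith
    have := natPQ he0
    linarith
  -- C12
  · have hbe : k + 2 ≤ e := by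
      by_contra h
      have := natPQ (show e ≤ k+1 by omega)
      have hex : (k+1)*(k+1)+(k+1) = k*k+3*k+2 := by ring
      omega
    have h1 : e + 1 ≤ c := by
      by_contra h
      have := natPQ (show c ≤ e by omega)
      omega
    rcases (by omega : c = e+1 ∨ c = e+2 ∨ e+3 ≤ c) with h | h | h
    · subst h
      have hex : (e+1)*(e+1)+(e+1) = e*e+e+2*e+2 := by ring
      have h3 : e + 3 = 3*k := by omega
      have h9 : (e+3)*(e+3) = 9*(k*k) := by rw [h3]; ring
      have hex2 : (e+3)*(e+3) = e*e+6*e+9 := by ring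
      omega
    · subst h
      have hex : (e+2)*(e+2)+(e+2) = e*e+e+4*e+6 := by ring
      have h3 : 2*e + 5 = 3*k := by omega
      have h9 : (2*e+5)*(2*e+5) = 9*(k*k) := by rw [h3]; ring
      have hex2 : (2*e+5)*(2*e+5) = 4*(e*e)+20*e+25 := by ring
      rcases le_or_gt k 16 with hk16 | hk16
      · have : k*k ≤ 16*k := Nat.mul_le_mul_right k hk16
        omega
      · have : 17*k ≤ k*k := Nat.mul_le_mul_right k (by omega)
        omega
    · have h2 := natPQ h
      have hex : (e+3)*(e+3)+(e+3) = e*e+e+6*e+12 := by ring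
      omega
  -- C13
  · have hbe : k + 1 ≤ e := by
      by_contra h
      have := natPQ (show e ≤ k by omega)
      omega
    have h1 : e + 1 ≤ c := by
      by_contra h
      have := natPQ (show c ≤ e by omega)
      omega
    rcases (by omega : c = e+1 ∨ c = e+2 ∨ e+3 ≤ c) with h | h | h
    · subst h
      have hex : (e+1)*(e+1)+(e+1) = e*e+e+2*e+2 := by ring
      have h3 : e + 1 = 2*k := by omega
      have h9 : (e+1)*(e+1) = 4*(k*k) := by rw [h3]; ring
      have hex2 : (e+1)*(e+1) = e*e+2*e+1 := by ring
      omega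
    · subst h
      have hex : (e+2)*(e+2)+(e+2) = e*e+e+4*e+6 := by ring
      omega
    · have h2 := natPQ h
      have hex : (e+3)*(e+3)+(e+3) = e*e+e+6*e+12 := by ring
      omega
  -- C21
  · have hbc : k + 1 ≤ c := by
      by_contra h
      have := natPQ (show c ≤ k by omega)
      omega
    have h1 : c + 1 ≤ e := by
      by_contra h
      have := natPQ (show e ≤ c by omega)
      omega
    rcases (by omega : e = c+1 ∨ e = c+2 ∨ c+3 ≤ e) with h | h | h
    · subst h
      have hex : (c+1)*(c+1)+(c+1) = c*c+c+2*c+2 := by ring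
      have h3 : c + 3 = 2*k := by omega
      have h9 : (c+3)*(c+3) = 4*(k*k) := by rw [h3]; ring
      have hex2 : (c+3)*(c+3) = c*c+6*c+9 := by ring
      omega
    · subst h
      have hex : (c+2)*(c+2)+(c+2) = c*c+c+4*c+6 := by ring
      omega
    · have h2 := natPQ h
      have hex : (c+3)*(c+3)+(c+3) = c*c+c+6*c+12 := by ring
      omega
  -- C22
  · have hbe : k + 2 ≤ e := by
      by_contra h
      have := natPQ (show e ≤ k+1 by omega)
      have hex : (k+1)*(k+1)+(k+1) = k*k+3*k+2 := by ring
      omega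
    have h1 : e + 1 ≤ c := by
      by_contra h
      have := natPQ (show c ≤ e by omega)
      omega
    have h2 := natPQ h1
    have hex : (e+1)*(e+1)+(e+1) = e*e+e+2*e+2 := by ring
    omega
  -- C23
  · have h1 : e + 1 ≤ c := by
      by_contra h
      have := natPQ (show c ≤ e by omega)
      omega
    have h2 := natPQ h1
    have hex : (e+1)*(e+1)+(e+1) = e*e+e+2*e+2 := by ring
    have he0 : e ≤ 0 := by linarith
    have := natPQ he0
    linarith
  -- C31
  · have hbc : k + 1 ≤ c := by
      by_contra h
      have := natPQ (show c ≤ k by omega)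
      omega
    have h1 : c + 1 ≤ e := by
      by_contra h
      have := natPQ (show e ≤ c by omega)
      omega
    have h2 := natPQ h1
    have hex : (c+1)*(c+1)+(c+1) = c*c+c+2*c+2 := by ring
    omega
  -- C32
  · have hbe : k + 2 ≤ e := by
      by_contra h
      have := natPQ (show e ≤ k+1 by omega)
      have hex : (k+1)*(k+1)+(k+1) = k*k+3*k+2 := by ring
      omega
    have h1 : e + 1 ≤ c := by
      by_contra h
      have := natPQ (show c ≤ e by omega)
      omega
    rcases (by omega : c = e+1 ∨ c = e+2 ∨ e+3 ≤ c) with h | h | h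
    · subst h
      have hex : (e+1)*(e+1)+(e+1) = e*e+e+2*e+2 := by ring
      have h3 : e + 3 = 2*k := by omega
      have h9 : (e+3)*(e+3) = 4*(k*k) := by rw [h3]; ring
      have hex2 : (e+3)*(e+3) = e*e+6*e+9 := by ring
      omega
    · subst h
      have hex : (e+2)*(e+2)+(e+2) = e*e+e+4*e+6 := by ring
      omega
    · have h2 := natPQ h
      have hex : (e+3)*(e+3)+(e+3) = e*e+e+6*e+12 := by ring
      omega
  -- C33
  · have hbe : k + 1 ≤ e := by
      by_contra h
      have := natPQ (show e ≤ k by omega)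
      omega
    have h1 : e + 1 ≤ c := by
      by_contra h
      have := natPQ (show c ≤ e by omega)
      omega
    have h2 := natPQ h1
    have hex : (e+1)*(e+1)+(e+1) = e*e+e+2*e+2 := by ring
    omega

end VC
namespace VC

lemma MM (k d : ℤ) (hd : 0 ≤ d) (hdk : d+1 ≤ k) (h : 2*(k*k)+2*k = 2*(d*d)+2*d) : False := by
  have h2 : (d+1)*(d+1) ≤ k*k := sqle (by omega) hdk
  have hex : (d+1)*(d+1) = d*d+2*d+1 := by ring
  linarith

lemma key (k d A : ℕ) (hk : 5 ≤ k) (hd3 : 3 ≤ d) (hdk : d + 1 ≤ k) (hA : 2*A = k*k+k) :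
    Function.Injective (transmission (varCaterpillar (2*A+1) (A+1) (A+d+1)))
    ∨ ∃ x : ℕ, x*x = 8*(k*k)+8*k+17+8*d ∨ x*x = 4*(d*d)+4*d+4*(k*k)+4*k+17
        ∨ x*x = 4*(d*d)+12*d+4*(k*k)+4*k+17 := by
  have hkk : 25 ≤ k*k := Nat.mul_le_mul hk hk
  have h5k : 5*k ≤ k*k := Nat.mul_le_mul_right k hk
  have hdA : d ≤ A := by omega
  have ha : A < 2*A+1 := by omega
  have hab : A ≤ A+d := by omega
  have hb : A+d < 2*A+1 := by omega
  have hAZ : 2*(A:ℤ) = (k:ℤ)*k+k := by exact_mod_cast hA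
  have hkZ : (5:ℤ) ≤ k := by exact_mod_cast hk
  have hd3Z : (3:ℤ) ≤ d := by exact_mod_cast hd3
  have hdkZ : (d:ℤ)+1 ≤ k := by exact_mod_cast hdk
  suffices H : ∀ i j : ℕ, ∀ (hi3 : i < 2*A+1+3) (hj3 : j < 2*A+1+3), i < j →
      transmission (varCaterpillar (2*A+1) (A+1) (A+d+1)) ⟨i, hi3⟩
        = transmission (varCaterpillar (2*A+1) (A+1) (A+d+1)) ⟨j, hj3⟩ →
      (∃ x : ℕ, x*x = 8*(k*k)+8*k+17+8*d ∨ x*x = 4*(d*d)+4*d+4*(k*k)+4*k+17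
        ∨ x*x = 4*(d*d)+12*d+4*(k*k)+4*k+17) by
    by_cases hinj : Function.Injective
        (transmission (varCaterpillar (2*A+1) (A+1) (A+d+1)))
    · exact Or.inl hinj
    · right
      rw [Function.not_injective_iff] at hinj
      obtain ⟨u, w, heq, hne⟩ := hinj
      rcases lt_trichotomy u.val w.val with h | h | h
      · exact H u.val w.val u.isLt w.isLt h heq
      · exact absurd (Fin.ext h) hne
      · exact H w.val u.val w.isLt u.isLt h heq.symm
  intro i j hi3 hj3 hij heq
  rcases (by omega : j < 2*A+1 ∨ j = 2*A+1 ∨ j = 2*A+1+1 ∨ j = 2*A+1+2)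
    with hj | hj | hj | hj
  -- ============ both on the path ============
  · exfalso
    have hi : i < 2*A+1 := by omega
    rw [tr_path ha hab hb i hi hi3, tr_path ha hab hb j hj hj3] at heq
    have t1 := two_SB (2*A+1) i (by omega)
    have t2 := two_SB (2*A+1) j (by omega)
    rw [show 2*A+1-1-i = 2*A-i from by omega] at t1
    rw [show 2*A+1-1-j = 2*A-j from by omega] at t2
    rcases le_or_gt j A with hjA | hjA
    · -- L1
      rw [show ab i A = A - i from by unfold ab; omega,
          show ab i (A+d) = A+d-i from by unfold ab; omega,
          show ab j A = A - j from by unfold ab; omega,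
          show ab j (A+d) = A+d-j from by unfold ab; omega] at heq
      zify [show i ≤ A from by omega, show i ≤ A+d from by omega, hjA,
        show j ≤ A+d from by omega, show i ≤ 2*A from by omega,
        show i ≤ 2*A+1 from by omega, show j ≤ 2*A from by omega,
        show j ≤ 2*A+1 from by omega] at heq t1 t2
      exact L1 (d := (d:ℤ)) (A := (A:ℤ)) (i := (i:ℤ)) (j := (j:ℤ)) (by omega) (by omega) (by omega)
        (by linear_combination 2*heq - t1 + t2)
    rcases le_or_gt i A with hiA | hiA
    · rcases le_or_gt j (A+d) with hjB | hjB
      · -- L2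
        rw [show ab i A = A - i from by unfold ab; omega,
            show ab i (A+d) = A+d-i from by unfold ab; omega,
            show ab j A = j - A from by unfold ab; omega,
            show ab j (A+d) = A+d-j from by unfold ab; omega] at heq
        zify [hiA, show i ≤ A+d from by omega, show A ≤ j from by omega, hjB,
          show i ≤ 2*A from by omega, show i ≤ 2*A+1 from by omega,
          show j ≤ 2*A from by omega, show j ≤ 2*A+1 from by omega] at heq t1 t2
        exact L2 (d := (d:ℤ)) (A := (A:ℤ)) (i := (i:ℤ)) (j := (j:ℤ)) (by omega) (by omega) (by omega)
          (by omega) (by linear_combination 2*heq - t1 + t2)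
      · -- L3
        rw [show ab i A = A - i from by unfold ab; omega,
            show ab i (A+d) = A+d-i from by unfold ab; omega,
            show ab j A = j - A from by unfold ab; omega,
            show ab j (A+d) = j-(A+d) from by unfold ab; omega] at heq
        zify [hiA, show i ≤ A+d from by omega, show A ≤ j from by omega,
          show A+d ≤ j from by omega,
          show i ≤ 2*A from by omega, show i ≤ 2*A+1 from by omega,
          show j ≤ 2*A from by omega, show j ≤ 2*A+1 from by omega] at heq t1 t2
        exact L3 (d := (d:ℤ)) (A := (A:ℤ)) (i := (i:ℤ)) (j := (j:ℤ)) hd3Z (by omega)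
          (by omega) (by omega) (by linear_combination 2*heq - t1 + t2)
    · rcases le_or_gt j (A+d) with hjB | hjB
      · -- L4
        rw [show ab i A = i - A from by unfold ab; omega,
            show ab i (A+d) = A+d-i from by unfold ab; omega,
            show ab j A = j - A from by unfold ab; omega,
            show ab j (A+d) = A+d-j from by unfold ab; omega] at heq
        zify [show A ≤ i from by omega, show i ≤ A+d from by omega,
          show A ≤ j from by omega, hjB,
          show i ≤ 2*A from by omega, show i ≤ 2*A+1 from by omega,
          show j ≤ 2*A from by omega, show j ≤ 2*A+1 from by omega] at heq t1 t2
        exact L4 (d := (d:ℤ)) (A := (A:ℤ)) (i := (i:ℤ)) (j := (j:ℤ)) (by omega) (by omega) (by omega)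
          (by linear_combination 2*heq - t1 + t2)
      rcases le_or_gt i (A+d) with hiB | hiB
      · -- L5
        rw [show ab i A = i - A from by unfold ab; omega,
            show ab i (A+d) = A+d-i from by unfold ab; omega,
            show ab j A = j - A from by unfold ab; omega,
            show ab j (A+d) = j-(A+d) from by unfold ab; omega] at heq
        zify [show A ≤ i from by omega, hiB, show A ≤ j from by omega,
          show A+d ≤ j from by omega,
          show i ≤ 2*A from by omega, show i ≤ 2*A+1 from by omega,
          show j ≤ 2*A from by omega, show j ≤ 2*A+1 from by omega] at heq t1 t2
        exact L5 (d := (d:ℤ)) (A := (A:ℤ)) (i := (i:ℤ)) (j := (j:ℤ)) (by omega) (by omega) (by omega)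
          (by linear_combination 2*heq - t1 + t2)
      · -- L6
        rw [show ab i A = i - A from by unfold ab; omega,
            show ab i (A+d) = i-(A+d) from by unfold ab; omega,
            show ab j A = j - A from by unfold ab; omega,
            show ab j (A+d) = j-(A+d) from by unfold ab; omega] at heq
        zify [show A ≤ i from by omega, show A+d ≤ i from by omega,
          show A ≤ j from by omega, show A+d ≤ j from by omega,
          show i ≤ 2*A from by omega, show i ≤ 2*A+1 from by omega,
          show j ≤ 2*A from by omega, show j ≤ 2*A+1 from by omega] at heq t1 t2
        exact L6 (d := (d:ℤ)) (A := (A:ℤ)) (i := (i:ℤ)) (j := (j:ℤ)) (by omega) (by omega) (by omega)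
          (by linear_combination 2*heq - t1 + t2)
  -- ============ i on path, j = m ============
  · subst hj
    have hi : i < 2*A+1 := by omega
    rw [tr_path ha hab hb i hi hi3, tr_m ha hab hb hj3,
      show A+d-A = d from by omega] at heq
    have t1 := two_SB (2*A+1) i (by omega)
    have tA := two_SB (2*A+1) A (by omega)
    rw [show 2*A+1-1-i = 2*A-i from by omega] at t1
    rw [show 2*A+1-1-A = A from by omega, show 2*A+1-A = A+1 from by omega] at tA
    exfalso
    rcases le_or_gt i A with hiA | hiA
    · rw [show ab i A = A - i from by unfold ab; omega,
          show ab i (A+d) = A+d-i from by unfold ab; omega] at heq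
      zify [hiA, show i ≤ A+d from by omega, show i ≤ 2*A from by omega,
        show i ≤ 2*A+1 from by omega] at heq t1 tA
      exact M1 (k := (k:ℤ)) (d := (d:ℤ)) (A := (A:ℤ)) (i := (i:ℤ)) hkZ hAZ (by omega) (by omega)
        (by linear_combination 2*heq - t1 + tA)
    rcases le_or_gt i (A+d) with hiB | hiB
    · rw [show ab i A = i - A from by unfold ab; omega,
          show ab i (A+d) = A+d-i from by unfold ab; omega] at heq
      zify [show A ≤ i from by omega, hiB, show i ≤ 2*A from by omega,
        show i ≤ 2*A+1 from by omega] at heq t1 tA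
      exact M2 (k := (k:ℤ)) (d := (d:ℤ)) (A := (A:ℤ)) (i := (i:ℤ)) hkZ hdkZ hAZ (by omega) (by omega)
        (by linear_combination 2*heq - t1 + tA)
    · rw [show ab i A = i - A from by unfold ab; omega,
          show ab i (A+d) = i-(A+d) from by unfold ab; omega] at heq
      zify [show A ≤ i from by omega, show A+d ≤ i from by omega,
        show i ≤ 2*A from by omega, show i ≤ 2*A+1 from by omega] at heq t1 tA
      exact M3 (k := (k:ℤ)) (d := (d:ℤ)) (A := (A:ℤ)) (i := (i:ℤ)) hkZ hd3Z hdkZ hAZ (by omega)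
        (by linear_combination 2*heq - t1 + tA)
  -- ============ j = m+1 ============
  · subst hj
    rcases (by omega : i < 2*A+1 ∨ i = 2*A+1) with hi | hi
    · rw [tr_path ha hab hb i hi hi3, tr_m1 ha hab hb hj3,
        show A+d-A = d from by omega] at heq
      have t1 := two_SB (2*A+1) i (by omega)
      have tA := two_SB (2*A+1) A (by omega)
      rw [show 2*A+1-1-i = 2*A-i from by omega] at t1
      rw [show 2*A+1-1-A = A from by omega, show 2*A+1-A = A+1 from by omega] at tA
      rcases le_or_gt i A with hiA | hiA
      · exfalso
        rw [show ab i A = A - i from by unfold ab; omega,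
            show ab i (A+d) = A+d-i from by unfold ab; omega] at heq
        zify [hiA, show i ≤ A+d from by omega, show i ≤ 2*A from by omega,
          show i ≤ 2*A+1 from by omega] at heq t1 tA
        exact N1 (k := (k:ℤ)) (d := (d:ℤ)) (A := (A:ℤ)) (i := (i:ℤ)) hAZ (by omega) (by omega)
          (by linear_combination 2*heq - t1 + tA)
      rcases le_or_gt i (A+d) with hiB | hiB
      · exfalso
        rw [show ab i A = i - A from by unfold ab; omega,
            show ab i (A+d) = A+d-i from by unfold ab; omega] at heq
        zify [show A ≤ i from by omega, hiB, show i ≤ 2*A from by omega,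
          show i ≤ 2*A+1 from by omega] at heq t1 tA
        exact N2 (k := (k:ℤ)) (d := (d:ℤ)) (A := (A:ℤ)) (i := (i:ℤ)) hkZ hdkZ hAZ (by omega) (by omega)
          (by linear_combination 2*heq - t1 + tA)
      · -- certificate E1
        rw [show ab i A = i - A from by unfold ab; omega,
            show ab i (A+d) = i-(A+d) from by unfold ab; omega] at heq
        zify [show A ≤ i from by omega, show A+d ≤ i from by omega,
          show i ≤ 2*A from by omega, show i ≤ 2*A+1 from by omega] at heq t1 tA
        refine ⟨2*(i-A)+3, Or.inl ?_⟩
        have hcert := N3 (k := (k:ℤ)) (d := (d:ℤ)) (A := (A:ℤ)) (i := (i:ℤ)) hAZ (by omega)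
          (by linear_combination 2*heq - t1 + tA)
        zify [show A ≤ i from by omega]
        linear_combination hcert
    · -- i = m, j = m+1
      subst hi
      rw [tr_m ha hab hb hi3, tr_m1 ha hab hb hj3] at heq
      exfalso
      omega
  -- ============ j = m+2 ============
  · subst hj
    rcases (by omega : i < 2*A+1 ∨ i = 2*A+1 ∨ i = 2*A+1+1) with hi | hi | hi
    · rw [tr_path ha hab hb i hi hi3, tr_m2 ha hab hb hj3,
        show A+d-A = d from by omega] at heq
      have t1 := two_SB (2*A+1) i (by omega)
      have tB := two_SB (2*A+1) (A+d) (by omega)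
      rw [show 2*A+1-1-i = 2*A-i from by omega] at t1
      rw [show 2*A+1-1-(A+d) = A-d from by omega,
          show 2*A+1-(A+d) = A+1-d from by omega] at tB
      rcases le_or_gt i A with hiA | hiA
      · -- certificate E2
        rw [show ab i A = A - i from by unfold ab; omega,
            show ab i (A+d) = A+d-i from by unfold ab; omega] at heq
        zify [hiA, show i ≤ A+d from by omega, show i ≤ 2*A from by omega,
          show i ≤ 2*A+1 from by omega, hdA, show d ≤ A+1 from by omega] at heq t1 tB
        refine ⟨2*(A-i)+3, Or.inr (Or.inl ?_)⟩
        have hcert := P1 (k := (k:ℤ)) (d := (d:ℤ)) (A := (A:ℤ)) (i := (i:ℤ)) hAZ (by omega)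
          (by linear_combination 2*heq - t1 + tB)
        zify [hiA]
        linear_combination hcert
      rcases le_or_gt i (A+d) with hiB | hiB
      · exfalso
        rw [show ab i A = i - A from by unfold ab; omega,
            show ab i (A+d) = A+d-i from by unfold ab; omega] at heq
        zify [show A ≤ i from by omega, hiB, show i ≤ 2*A from by omega,
          show i ≤ 2*A+1 from by omega, hdA, show d ≤ A+1 from by omega] at heq t1 tB
        exact P2 (k := (k:ℤ)) (d := (d:ℤ)) (A := (A:ℤ)) (i := (i:ℤ)) hkZ hd3Z hAZ (by omega) (by omega)
          (by linear_combination 2*heq - t1 + tB)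
      · -- certificate E3
        rw [show ab i A = i - A from by unfold ab; omega,
            show ab i (A+d) = i-(A+d) from by unfold ab; omega] at heq
        zify [show A ≤ i from by omega, show A+d ≤ i from by omega,
          show i ≤ 2*A from by omega, show i ≤ 2*A+1 from by omega, hdA,
          show d ≤ A+1 from by omega] at heq t1 tB
        refine ⟨2*(i-A)+3, Or.inr (Or.inr ?_)⟩
        have hcert := P3 (k := (k:ℤ)) (d := (d:ℤ)) (A := (A:ℤ)) (i := (i:ℤ)) hAZ (by omega)
          (by linear_combination 2*heq - t1 + tB)
        zify [show A ≤ i from by omega]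
        linear_combination hcert
    · -- i = m, j = m+2
      subst hi
      rw [tr_m ha hab hb hi3, tr_m2 ha hab hb hj3,
        show A+d-A = d from by omega] at heq
      have tA := two_SB (2*A+1) A (by omega)
      have tB := two_SB (2*A+1) (A+d) (by omega)
      rw [show 2*A+1-1-A = A from by omega, show 2*A+1-A = A+1 from by omega] at tA
      rw [show 2*A+1-1-(A+d) = A-d from by omega,
          show 2*A+1-(A+d) = A+1-d from by omega] at tB
      exfalso
      zify [hdA, show d ≤ A+1 from by omega] at heq tA tB
      have hzero : (0:ℤ) = 2*((d:ℤ)*d)+2*d+4 := by linear_combination 2*heq - tA + tB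
      have : (0:ℤ) ≤ (d:ℤ)*d := mul_self_nonneg _
      linarith
    · -- i = m+1, j = m+2
      subst hi
      rw [tr_m1 ha hab hb hi3, tr_m2 ha hab hb hj3,
        show A+d-A = d from by omega] at heq
      have tA := two_SB (2*A+1) A (by omega)
      have tB := two_SB (2*A+1) (A+d) (by omega)
      rw [show 2*A+1-1-A = A from by omega, show 2*A+1-A = A+1 from by omega] at tA
      rw [show 2*A+1-1-(A+d) = A-d from by omega,
          show 2*A+1-(A+d) = A+1-d from by omega] at tB
      exfalso
      zify [hdA, show d ≤ A+1 from by omega] at heq tA tB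
      exact MM (k:ℤ) (d:ℤ) (by positivity) hdkZ
        (by linear_combination 2*heq - tA + tB - 2*hAZ)
  
end VC


open VC

/-- for even `n ≥ 34` with `4n - 15` a perfect square and
`k = (√(4n-15) - 1)/2`, at least one of the variant caterpillars
`C_{n-3}(n/2 - 1, 2; n/2 + k - 2, 1)` and `C_{n-3}(n/2 - 1, 2; n/2 + k - 3, 1)` is
transmission irregular. -/
theorem varCaterpillar_TI_one_of_two (n : ℕ) (heven : Even n) (hn : 34 ≤ n)
    (hsq : IsPerfectSquare (4 * n - 15)) (k : ℕ)
    (hk : k = (Nat.sqrt (4 * n - 15) - 1) / 2) :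
    TransIrregular (varCaterpillar (n - 3) (n / 2 - 1) (n / 2 + k - 2)) ∨
      TransIrregular (varCaterpillar (n - 3) (n / 2 - 1) (n / 2 + k - 3)) := by
  obtain ⟨t, ht⟩ := hsq
  rw [ht, Nat.sqrt_eq] at hk
  -- t is odd and n = k^2 + k + 4
  have hnk : n = k*k + k + 4 := by
    rcases Nat.even_or_odd t with ⟨c, hc⟩ | ⟨c, hc⟩
    · exfalso
      subst hc
      have he : (c+c)*(c+c) = 4*(c*c) := by ring
      omega
    · subst hc
      have hkc : k = c := by omega
      subst hkc
      have he : (2*k+1)*(2*k+1) = 4*(k*k)+4*k+1 := by ring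
      omega
  have hk5 : 5 ≤ k := by
    rcases le_or_gt k 4 with h | h
    · have : k*k ≤ 4*4 := Nat.mul_le_mul h h
      omega
    · omega
  obtain ⟨A, hA⟩ : ∃ A, 2*A = k*k + k := by
    rcases Nat.even_or_odd k with ⟨c, hc⟩ | ⟨c, hc⟩
    · exact ⟨2*(c*c)+c, by subst hc; ring⟩
    · exact ⟨(2*c+1)*(c+1), by subst hc; ring⟩
  have hn2 : n = 2*A + 4 := by omega
  rw [show n - 3 = 2*A+1 from by omega, show n/2 - 1 = A+1 from by omega,
      show n/2 + k - 2 = A+(k-1)+1 from by omega,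
      show n/2 + k - 3 = A+(k-2)+1 from by omega]
  have hcard : 2 ≤ Fintype.card (Fin (2*A+1+3)) := by
    rw [Fintype.card_fin]; omega
  have K1 := key k (k-1) A hk5 (by omega) (by omega) hA
  have K2 := key k (k-2) A hk5 (by omega) (by omega) hA
  rcases K1 with h1 | ⟨x, hx⟩
  · exact Or.inl ⟨hcard, h1⟩
  rcases K2 with h2 | ⟨z, hz⟩
  · exact Or.inr ⟨hcard, h2⟩
  exfalso
  obtain ⟨a, rfl⟩ : ∃ a, k = a + 2 := ⟨k - 2, by omega⟩
  have e0 : (a+1)*(a+1) = a*a+2*a+1 := by ring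
  have e1 : (a+2)*(a+2) = (a+1)*(a+1)+2*a+3 := by ring
  have e2 : (a+2)*(a+2) = a*a+4*a+4 := by ring
  rw [show a+2-1 = a+1 from by omega] at hx
  rw [show a+2-2 = a from by omega] at hz
  refine combos (a+2) x z hk5 ?_ ?_
  · rcases hx with h | h | h
    · exact Or.inl (by omega)
    · exact Or.inr (Or.inl (by omega))
    · exact Or.inr (Or.inr (by omega))
  · rcases hz with h | h | h
    · exact Or.inl (by omega)
    · exact Or.inr (Or.inl (by omega))
    · exact Or.inr (Or.inr (by omega))
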